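/- Let L and M be even lattices and let L ⊕ M ⊆ N be a finite index extension of their orthogonal direct sum by an even lattice N. Let f be an isometry of L acting trivially on the discriminant group A_L (i.e. the induced map on L^∨/L is the identity). Then there exists an isometry f̄ of N such that f̄ restricted to L equals f and f̄ restricted to M is the identity. -/
import Mathlib

open Matrix

section

variable {ι : Type*} [Fintype ι]

/-- The lattice `ℤ^ι` inside `ℚ^ι`. -/
def intLat (ι : Type*) : AddSubgroup (ι → ℚ) := ((Int.castAddHom ℚ).compLeft ι).range

/-- The ℚ-bilinear extension of the bilinear form with Gram matrix `M`. -/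
def bilinQ (M : Matrix ι ι ℤ) (x y : ι → ℚ) : ℚ := x ⬝ᵥ ((M.map (Int.cast : ℤ → ℚ)) *ᵥ y)

/-- The quotient map `ℚ^ι → ℚ^ι/ℤ^ι`. -/
def quotMap (ι : Type*) : (ι → ℚ) →+ (ι → ℚ) ⧸ intLat ι := QuotientAddGroup.mk' (intLat ι)

/-- The canonical inclusion `ℤ^ι → ℚ^ι`. -/
def castVec (v : ι → ℤ) : ι → ℚ := fun i => (v i : ℚ)

end

lemma mem_intLat {ι : Type*} [Fintype ι] (v : ι → ℤ) : castVec v ∈ intLat ι :=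
  ⟨v, rfl⟩

lemma castVec_mulVec {m n : Type*} [Fintype n] (A : Matrix m n ℤ) (v : n → ℤ) :
    (A.map (Int.cast : ℤ → ℚ)) *ᵥ castVec v = castVec (A *ᵥ v) := by
  funext i
  simp [Matrix.mulVec, dotProduct, castVec, Matrix.map_apply]

lemma castVec_elim {p q : Type*} (a : p → ℤ) (b : q → ℤ) :
    castVec (Sum.elim a b) = Sum.elim (castVec a) (castVec b) := by
  funext i; cases i <;> rfl

lemma castVec_zero {ι : Type*} : castVec (0 : ι → ℤ) = 0 := by
  funext i; simp [castVec]

/-- Let `L` and `M` be even lattices (Gram matrices `M₁` and `M₂`) and let `L ⊕ M ⊆ N` be a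
finite index extension by an even lattice, realized inside `(L ⊕ M) ⊗ ℚ`. Let `f` (given by
the matrix `P`) be an isometry of `L` acting trivially on the discriminant group `A_L`.
Then there exists an isometry `F` of `N` restricting to `f` on `L` and to the identity
on `M`. -/
theorem stmt_1 (p q : ℕ)
    (M₁ : Matrix (Fin p) (Fin p) ℤ) (M₂ : Matrix (Fin q) (Fin q) ℤ)
    (hsymm₁ : M₁ᵀ = M₁) (hnd₁ : M₁.det ≠ 0)
    (heven₁ : ∀ v : Fin p → ℤ, ∃ k : ℤ, v ⬝ᵥ (M₁ *ᵥ v) = 2 * k)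
    (hsymm₂ : M₂ᵀ = M₂) (hnd₂ : M₂.det ≠ 0)
    (heven₂ : ∀ v : Fin q → ℤ, ∃ k : ℤ, v ⬝ᵥ (M₂ *ᵥ v) = 2 * k)
    -- `N` is an even overlattice of `L ⊕ M` of finite index:
    (N : AddSubgroup ((Fin p ⊕ Fin q) → ℚ))
    (hNsub : intLat (Fin p ⊕ Fin q) ≤ N)
    (hNfin : Finite ↥(N.map (quotMap (Fin p ⊕ Fin q))))
    (hNint : ∀ x ∈ N, ∀ y ∈ N, ∃ k : ℤ,
      bilinQ (Matrix.fromBlocks M₁ 0 0 M₂) x y = (k : ℚ))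
    (hNeven : ∀ x ∈ N, ∃ k : ℤ,
      bilinQ (Matrix.fromBlocks M₁ 0 0 M₂) x x = 2 * (k : ℚ))
    -- `f = P` is an isometry of `L`:
    (P : Matrix (Fin p) (Fin p) ℤ) (hP : Pᵀ * M₁ * P = M₁) (hPu : IsUnit P.det)
    -- `f` acts trivially on the discriminant group `A_L = L^∨/L`:
    (hPdisc : ∀ x : Fin p → ℚ,
      (∀ y : Fin p → ℤ, ∃ k : ℤ, bilinQ M₁ x (castVec y) = (k : ℚ)) →
      ∃ z : Fin p → ℤ, (P.map (Int.cast : ℤ → ℚ)) *ᵥ x - x = castVec z) :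
    ∃ F : Matrix (Fin p ⊕ Fin q) (Fin p ⊕ Fin q) ℚ,
      -- `F` is an isometry of the ambient quadratic space,
      Fᵀ * ((Matrix.fromBlocks M₁ 0 0 M₂).map (Int.cast : ℤ → ℚ)) * F =
        (Matrix.fromBlocks M₁ 0 0 M₂).map (Int.cast : ℤ → ℚ) ∧
      -- mapping `N` bijectively onto itself,
      (∀ x : (Fin p ⊕ Fin q) → ℚ, x ∈ N ↔ F *ᵥ x ∈ N) ∧
      -- whose restriction to `L` is `f`,
      (∀ l : Fin p → ℤ,
        F *ᵥ castVec (Sum.elim l 0) = castVec (Sum.elim (P *ᵥ l) 0)) ∧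
      -- and whose restriction to `M` is the identity:
      (∀ x : (Fin p ⊕ Fin q) → ℚ, (∀ i : Fin p, x (Sum.inl i) = 0) → F *ᵥ x = x) := by
  classical
  set Q : Matrix (Fin p) (Fin p) ℤ := P⁻¹ with hQ
  have hPQ : P * Q = 1 := Matrix.mul_nonsing_inv P hPu
  have hQP : Q * P = 1 := Matrix.nonsing_inv_mul P hPu
  have hcc : (Int.cast : ℤ → ℚ) = ⇑(Int.castRingHom ℚ) := rfl
  set Pc := P.map (Int.cast : ℤ → ℚ) with hPc
  set Qc := Q.map (Int.cast : ℤ → ℚ) with hQc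
  set M₁c := M₁.map (Int.cast : ℤ → ℚ) with hM₁c
  set M₂c := M₂.map (Int.cast : ℤ → ℚ) with hM₂c
  have hQPc : Qc * Pc = 1 := by
    rw [hPc, hQc, hcc, ← Matrix.map_mul, hQP]; simp
  set F : Matrix (Fin p ⊕ Fin q) (Fin p ⊕ Fin q) ℚ :=
    Matrix.fromBlocks Pc 0 0 1 with hF
  have hPisoc : Pcᵀ * M₁c * Pc = M₁c := by
    rw [hPc, hM₁c, hcc, ← Matrix.transpose_map, ← Matrix.map_mul, ← Matrix.map_mul, hP]
  -- `M₁ P = Qᵀ M₁` over ℚ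
  have hkey : Qcᵀ * M₁c = M₁c * Pc := by
    have h1 : Pᵀ * M₁ = M₁ * Q := by
      calc Pᵀ * M₁ = Pᵀ * M₁ * (P * Q) := by rw [hPQ, Matrix.mul_one]
        _ = (Pᵀ * M₁ * P) * Q := by noncomm_ring
        _ = M₁ * Q := by rw [hP]
    have h2' : M₁ * P = Qᵀ * M₁ := by
      simpa [Matrix.transpose_mul, hsymm₁] using congrArg Matrix.transpose h1
    have h2 : Qᵀ * M₁ = M₁ * P := h2'.symm
    rw [hQc, hPc, hM₁c, hcc, ← Matrix.transpose_map, ← Matrix.map_mul, ← Matrix.map_mul, h2]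
  have hGc : (Matrix.fromBlocks M₁ 0 0 M₂).map (Int.cast : ℤ → ℚ) =
      Matrix.fromBlocks M₁c 0 0 M₂c := by
    simp [Matrix.fromBlocks_map, hM₁c, hM₂c]
  set dual : (Fin p → ℚ) → Prop :=
    fun x => ∀ y : Fin p → ℤ, ∃ k : ℤ, bilinQ M₁ x (castVec y) = (k : ℚ) with hdual
  -- first components of elements of `N` lie in `L^∨`
  have hdualN : ∀ x ∈ N, dual (x ∘ Sum.inl) := by
    intro x hx y
    obtain ⟨k, hk⟩ := hNint x hx (castVec (Sum.elim y 0))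
      (hNsub (mem_intLat (Sum.elim y 0)))
    refine ⟨k, ?_⟩
    rw [← hk]
    show (x ∘ Sum.inl) ⬝ᵥ (M₁c *ᵥ castVec y) = _
    rw [bilinQ, castVec_elim, castVec_zero, hGc, Matrix.fromBlocks_mulVec]
    simp [dotProduct, Fintype.sum_sum_type]
  -- `L^∨` is stable under `Qc`
  have hdualQ : ∀ x : Fin p → ℚ, dual x → dual (Qc *ᵥ x) := by
    intro x hx y
    obtain ⟨k, hk⟩ := hx (P *ᵥ y)
    refine ⟨k, ?_⟩
    rw [← hk]
    show (Qc *ᵥ x) ⬝ᵥ (M₁c *ᵥ castVec y) = x ⬝ᵥ (M₁c *ᵥ castVec (P *ᵥ y))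
    calc (Qc *ᵥ x) ⬝ᵥ (M₁c *ᵥ castVec y)
        = (x ᵥ* Qcᵀ) ⬝ᵥ (M₁c *ᵥ castVec y) := by rw [Matrix.vecMul_transpose]
      _ = x ⬝ᵥ (Qcᵀ *ᵥ (M₁c *ᵥ castVec y)) := (Matrix.dotProduct_mulVec _ _ _).symm
      _ = x ⬝ᵥ ((Qcᵀ * M₁c) *ᵥ castVec y) := by rw [Matrix.mulVec_mulVec]
      _ = x ⬝ᵥ ((M₁c * Pc) *ᵥ castVec y) := by rw [hkey]
      _ = x ⬝ᵥ (M₁c *ᵥ castVec (P *ᵥ y)) := by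
          rw [← Matrix.mulVec_mulVec, hPc, castVec_mulVec]
  -- `F x = x + integral vector` whenever `x∘inl ∈ L^∨`
  have hstep : ∀ x : (Fin p ⊕ Fin q) → ℚ, dual (x ∘ Sum.inl) →
      ∃ w : (Fin p ⊕ Fin q) → ℤ, F *ᵥ x = x + castVec w := by
    intro x hx
    obtain ⟨z, hz⟩ := hPdisc _ hx
    refine ⟨Sum.elim z 0, ?_⟩
    rw [hF, Matrix.fromBlocks_mulVec]
    funext i
    cases i with
    | inl i =>
        have hz' := congrFun hz i
        simp only [Pi.sub_apply] at hz'
        simp only [Sum.elim_inl, Pi.add_apply, Matrix.zero_mulVec, Pi.zero_apply, add_zero,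
          castVec_elim]
        rw [← hz']
        simp only [Function.comp_apply]
        ring
    | inr j =>
        simp [castVec_elim, castVec_zero, Matrix.zero_mulVec]
  -- forward membership
  have hmem : ∀ x ∈ N, F *ᵥ x ∈ N := by
    intro x hx
    obtain ⟨w, hw⟩ := hstep x (hdualN x hx)
    rw [hw]
    exact N.add_mem hx (hNsub (mem_intLat w))
  refine ⟨F, ?_, ?_, ?_, ?_⟩
  · -- isometry
    rw [hGc, hF, Matrix.fromBlocks_transpose, Matrix.fromBlocks_multiply,
      Matrix.fromBlocks_multiply]
    simp [hPisoc]
  · -- maps N onto N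
    intro x
    refine ⟨hmem x, ?_⟩
    intro hFx
    have h2 : (F *ᵥ x) ∘ Sum.inl = Pc *ᵥ (x ∘ Sum.inl) := by
      funext i
      rw [hF, Matrix.fromBlocks_mulVec]
      simp
    have h3 : x ∘ Sum.inl = Qc *ᵥ ((F *ᵥ x) ∘ Sum.inl) := by
      rw [h2, Matrix.mulVec_mulVec, hQPc, Matrix.one_mulVec]
    have h4 : dual (x ∘ Sum.inl) := by
      rw [h3]; exact hdualQ _ (hdualN _ hFx)
    obtain ⟨w, hw⟩ := hstep x h4
    have hx : x = F *ᵥ x - castVec w := by rw [hw]; abel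
    rw [hx]
    exact N.sub_mem hFx (hNsub (mem_intLat w))
  · -- restriction to L
    intro l
    rw [hF, castVec_elim, castVec_elim, castVec_zero, Matrix.fromBlocks_mulVec]
    simp [hPc, castVec_mulVec]
  · -- restriction to M
    intro x hx
    have h0 : x ∘ Sum.inl = 0 := funext hx
    rw [hF, Matrix.fromBlocks_mulVec, h0]
    funext i
    cases i <;> simp [hx]
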